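/- The operator D commutes with pointwise suprema of bounded monotone increasing sequences of functions: if (f_n)_{n ∈ ℕ₀} is a sequence of functions ℝ^d → ℝ with f_n ≤ f_{n+1} pointwise for all n and such that for every y ∈ ℝ^d the set {f_n(y) : n ∈ ℕ₀} is bounded above, then D(y ↦ sup_n f_n(y)) = y ↦ sup_n (D f_n)(y). -/

import Mathlib

open Finset

/-- The weighted arithmetic average operator:
`(A f)(y) = ∑ k, α k * f (y - x k)`. -/
noncomputable def avgOp (d m : ℕ) (α : Fin m → ℝ) (x : Fin m → (Fin d → ℝ))
    (f : (Fin d → ℝ) → ℝ) : (Fin d → ℝ) → ℝ :=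
  fun y => ∑ k, α k * f (y - x k)

/-- The Bermudan iteration operator: `(D f)(y) = max (c * (A f)(y)) (g y)`. -/
noncomputable def bermOp (d m : ℕ) (α : Fin m → ℝ) (x : Fin m → (Fin d → ℝ))
    (c : ℝ) (g : (Fin d → ℝ) → ℝ) (f : (Fin d → ℝ) → ℝ) : (Fin d → ℝ) → ℝ :=
  fun y => max (c * avgOp d m α x f y) (g y)

/-! `D` is monotone and continuous along pointwise convergent sequences; for an increasing bounded
sequence the pointwise supremum is the pointwise limit, so `D` maps it to the limit of the
increasing sequence `D fₙ`, which is again its supremum. -/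

open Filter Topology

section

variable {d m : ℕ} {α : Fin m → ℝ} {x : Fin m → (Fin d → ℝ)} {c : ℝ} {g : (Fin d → ℝ) → ℝ}

theorem avgOp_mono (hα : ∀ k, 0 ≤ α k) : Monotone (avgOp d m α x) :=
  fun _ _ hf _ => sum_le_sum fun k _ => mul_le_mul_of_nonneg_left (hf _) (hα k)

theorem bermOp_mono (hα : ∀ k, 0 ≤ α k) (hc : 0 ≤ c) : Monotone (bermOp d m α x c g) :=
  fun _ _ hf y => max_le_max_right _ (mul_le_mul_of_nonneg_left (avgOp_mono hα hf y) hc)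

theorem tendsto_avgOp {ι : Type*} {l : Filter ι} {f : ι → (Fin d → ℝ) → ℝ}
    {F : (Fin d → ℝ) → ℝ} (hf : ∀ z, Tendsto (fun i => f i z) l (𝓝 (F z))) (y : Fin d → ℝ) :
    Tendsto (fun i => avgOp d m α x (f i) y) l (𝓝 (avgOp d m α x F y)) :=
  tendsto_finsetSum _ fun k _ => (hf (y - x k)).const_mul (α k)

theorem tendsto_bermOp {ι : Type*} {l : Filter ι} {f : ι → (Fin d → ℝ) → ℝ}
    {F : (Fin d → ℝ) → ℝ} (hf : ∀ z, Tendsto (fun i => f i z) l (𝓝 (F z))) (y : Fin d → ℝ) :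
    Tendsto (fun i => bermOp d m α x c g (f i) y) l (𝓝 (bermOp d m α x c g F y)) :=
  ((tendsto_avgOp hf y).const_mul c).max tendsto_const_nhds

end

theorem bermOp_iSup_comm_general (d m : ℕ)
    (α : Fin m → ℝ) (hα : ∀ k, α k ∈ Set.Icc (0:ℝ) 1)
    (x : Fin m → (Fin d → ℝ))
    (c : ℝ) (hc : c ∈ Set.Ioo (0:ℝ) 1)
    (g : (Fin d → ℝ) → ℝ)
    (f : ℕ → (Fin d → ℝ) → ℝ)
    (hmono : ∀ n : ℕ, ∀ y, f n y ≤ f (n + 1) y)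
    (hbdd : ∀ y, BddAbove (Set.range fun n : ℕ => f n y)) :
    bermOp d m α x c g (fun y => ⨆ n : ℕ, f n y) =
      fun y => ⨆ n : ℕ, bermOp d m α x c g (f n) y := by
  funext y
  have hf : Monotone f := monotone_nat_of_le_succ fun n z => hmono n z
  have hlim : ∀ z, Tendsto (fun n => f n z) atTop (𝓝 (⨆ n, f n z)) := fun z =>
    tendsto_atTop_ciSup (fun _ _ hab => hf hab z) (hbdd z)
  have hDf : Monotone fun n => bermOp d m α x c g (f n) y := fun _ _ hab =>
    bermOp_mono (fun k => (hα k).1) hc.1.le (hf hab) y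
  exact (isLUB_of_tendsto_atTop hDf (tendsto_bermOp hlim y)).ciSup_eq.symm

/-- `D` commutes with pointwise suprema of bounded monotonely
increasing sequences of functions. -/
theorem bermOp_iSup_comm (d m : ℕ) (hm : 1 ≤ m)
    (α : Fin m → ℝ) (hα : ∀ k, α k ∈ Set.Icc (0:ℝ) 1) (hsum : ∑ k, α k = 1)
    (x : Fin m → (Fin d → ℝ))
    (c : ℝ) (hc : c ∈ Set.Ioo (0:ℝ) 1)
    (g : (Fin d → ℝ) → ℝ)
    (f : ℕ → (Fin d → ℝ) → ℝ)
    (hmono : ∀ n : ℕ, ∀ y, f n y ≤ f (n + 1) y)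
    (hbdd : ∀ y, BddAbove (Set.range fun n : ℕ => f n y)) :
    bermOp d m α x c g (fun y => ⨆ n : ℕ, f n y) =
      fun y => ⨆ n : ℕ, bermOp d m α x c g (f n) y :=
  bermOp_iSup_comm_general d m α hα x c hc g f hmono hbdd
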